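/- arXiv:2108.11816 — 2 statements merged into one kernel-verified Lean document; each statement's English description precedes it below -/
import Mathlib

section
/- For every bipartite multigraph G and every function f : V(G) → ℕ with f(v) ≥ 1 for all v, the f-chromatic index satisfies χ'_f(G) = Δ_f(G). -/
open Classical

noncomputable section

namespace MG

variable {V : Type} {E : Type} [Fintype V] [Fintype E] [DecidableEq V]

/-- The number of times vertex `v` occurs as an endpoint of the unordered pair `s`
(so a loop at `v` counts twice). -/
def mult (v : V) (s : Sym2 V) : ℕ :=
  Sym2.lift ⟨fun a b => (if a = v then 1 else 0) + (if b = v then 1 else 0),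
    fun _ _ => add_comm _ _⟩ s

/-- The degree of a vertex in the multigraph whose edges `E` have endpoints given
by `ends` (loops count twice). -/
def degree (ends : E → Sym2 V) (v : V) : ℕ := ∑ e : E, mult v (ends e)

/-- Maximum degree `Δ(G)`. -/
def maxDegree (ends : E → Sym2 V) : ℕ := Finset.univ.sup fun v => degree ends v

/-- `e(S)`: the number of edges with all endpoints in `S`. -/
def edgesWithin (ends : E → Sym2 V) (S : Finset V) : ℕ :=
  (Finset.univ.filter fun e => ∀ v ∈ ends e, v ∈ S).card

/-- The degree of `v` in the subgraph induced by `S`. -/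
def degreeIn (ends : E → Sym2 V) (S : Finset V) (v : V) : ℕ :=
  ∑ e ∈ Finset.univ.filter (fun e => ∀ u ∈ ends e, u ∈ S), mult v (ends e)

/-- Adjacency; a vertex with a loop is adjacent to itself. -/
def Adj (ends : E → Sym2 V) (u v : V) : Prop := ∃ e, ends e = s(u, v)

/-- The multigraph has no loops. -/
def Loopless (ends : E → Sym2 V) : Prop := ∀ e, ¬ (ends e).IsDiag

/-- Reachability by walks. -/
def Reaches (ends : E → Sym2 V) (u v : V) : Prop :=
  Relation.ReflTransGen (Adj ends) u v

/-- The connected component of `v`, as a set of vertices. -/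
def component (ends : E → Sym2 V) (v : V) : Finset V :=
  Finset.univ.filter fun u => Reaches ends v u

/-- A pseudoforest: every connected component contains at most one cycle
(a loop counts as a cycle); equivalently, every connected component has at
most as many edges as vertices. -/
def IsPseudoforest (ends : E → Sym2 V) : Prop :=
  ∀ v : V, edgesWithin ends (component ends v) ≤ (component ends v).card

/-- A forest (acyclic multigraph): every connected component has strictly fewer
edges than vertices. -/
def IsForest (ends : E → Sym2 V) : Prop :=
  ∀ v : V, edgesWithin ends (component ends v) + 1 ≤ (component ends v).card

/-- An orientation assigns to each edge an ordered pair of its endpoints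
(tail, head). -/
def IsOrientation (ends : E → Sym2 V) (D : E → V × V) : Prop :=
  ∀ e, Sym2.mk (D e).1 (D e).2 = ends e

/-- Indegree of `v` under the orientation `D`. -/
def inDeg (D : E → V × V) (v : V) : ℕ := (Finset.univ.filter fun e => (D e).2 = v).card

/-- Outdegree of `v` under the orientation `D`. -/
def outDeg (D : E → V × V) (v : V) : ℕ := (Finset.univ.filter fun e => (D e).1 = v).card

/-- `G` is `(g,h)`-orientable: there is an orientation in which every vertex `v`
has indegree at most `g v` and outdegree at most `h v`. -/
def GHOrientable (ends : E → Sym2 V) (g h : V → ℕ∞) : Prop :=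
  ∃ D : E → V × V, IsOrientation ends D ∧
    (∀ v, (inDeg D v : ℕ∞) ≤ g v) ∧ (∀ v, (outDeg D v : ℕ∞) ≤ h v)

/-- `(g,h)` is a valid pair of functions for `G`. -/
def ValidPair (ends : E → Sym2 V) (g h : V → ℕ∞) : Prop :=
  (∀ v : V, 1 ≤ g v + h v) ∧
  (∀ u v : V, Adj ends u v → 1 ≤ g u + g v) ∧
  (∀ u v : V, Adj ends u v → 1 ≤ h u + h v)

/-- The endpoint map of the subgraph consisting of the edges satisfying `P`. -/
def subEnds (ends : E → Sym2 V) (P : E → Prop) : {e // P e} → Sym2 V :=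
  fun e => ends e.val

/-- A `(g,h)`-oriented-coloring: each color class is a `(g,h)`-orientable subgraph. -/
def GHColoring (ends : E → Sym2 V) (g h : V → ℕ∞) {k : ℕ} (C : E → Fin k) : Prop :=
  ∀ c : Fin k, GHOrientable (subEnds ends fun e => C e = c) g h

/-- The `(g,h)`-oriented chromatic index `χ'_{(g,h)}(G)`. -/
def ghChromaticIndex (ends : E → Sym2 V) (g h : V → ℕ∞) : ℕ :=
  sInf {k | ∃ C : E → Fin k, GHColoring ends g h C}

/-- Ceiling division `⌈a/b⌉` on ℕ. -/
def cdiv (a b : ℕ) : ℕ := (a + b - 1) / b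

/-- Replace `∞` values of `g` by the maximum degree `Δ(G)`. -/
def trunc (ends : E → Sym2 V) (g : V → ℕ∞) (v : V) : ℕ :=
  WithTop.untopD (maxDegree ends) (g v)

/-- The weighted maximum degree `Δ_{(g,h)}(G) = max_v ⌈d(v)/(g(v)+h(v))⌉`
(values `∞` of `g, h` replaced by `Δ(G)`). -/
def ghMaxDegree (ends : E → Sym2 V) (g h : V → ℕ∞) : ℕ :=
  Finset.univ.sup fun v => cdiv (degree ends v) (trunc ends g v + trunc ends h v)

/-- The weighted maximum density
`W_{(g,h)}(G) = max_{S, g(S) ≥ 1, h(S) ≥ 1} ⌈e(S)/min{g(S),h(S)}⌉`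
(values `∞` of `g, h` replaced by `Δ(G)`). -/
def ghMaxDensity (ends : E → Sym2 V) (g h : V → ℕ∞) : ℕ :=
  (Finset.univ.filter fun S : Finset V =>
      (1 ≤ ∑ v ∈ S, g v) ∧ (1 ≤ ∑ v ∈ S, h v)).sup
    fun S => cdiv (edgesWithin ends S)
      (min (∑ v ∈ S, trunc ends g v) (∑ v ∈ S, trunc ends h v))

/-- An edge-coloring into pseudoforests. -/
def PaColoring (ends : E → Sym2 V) {k : ℕ} (C : E → Fin k) : Prop :=
  ∀ c : Fin k, IsPseudoforest (subEnds ends fun e => C e = c)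

/-- The pseudoarboricity `pa(G)`. -/
def pa (ends : E → Sym2 V) : ℕ := sInf {k | ∃ C : E → Fin k, PaColoring ends C}

/-- An edge-coloring into degree-`f` pseudoforests. -/
def PafColoring (ends : E → Sym2 V) (f : V → ℕ) {k : ℕ} (C : E → Fin k) : Prop :=
  ∀ c : Fin k, IsPseudoforest (subEnds ends fun e => C e = c) ∧
    ∀ v, degree (subEnds ends fun e => C e = c) v ≤ f v

/-- The degree-`f` pseudoarboricity `pa_f(G)`. -/
def paf (ends : E → Sym2 V) (f : V → ℕ) : ℕ :=
  sInf {k | ∃ C : E → Fin k, PafColoring ends f C}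

/-- The weighted maximum degree `Δ_f(G) = max_v ⌈d(v)/f(v)⌉`. -/
def fMaxDegree (ends : E → Sym2 V) (f : V → ℕ) : ℕ :=
  Finset.univ.sup fun v => cdiv (degree ends v) (f v)

/-- An edge-coloring into degree-`f` forests. -/
def AfColoring (ends : E → Sym2 V) (f : V → ℕ) {k : ℕ} (C : E → Fin k) : Prop :=
  ∀ c : Fin k, IsForest (subEnds ends fun e => C e = c) ∧
    ∀ v, degree (subEnds ends fun e => C e = c) v ≤ f v

/-- The degree-`f` arboricity `a_f(G)`. -/
def af (ends : E → Sym2 V) (f : V → ℕ) : ℕ :=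
  sInf {k | ∃ C : E → Fin k, AfColoring ends f C}

/-- The arboricity `a(G)`. -/
def arboricity (ends : E → Sym2 V) : ℕ :=
  sInf {k | ∃ C : E → Fin k, ∀ c : Fin k, IsForest (subEnds ends fun e => C e = c)}

/-- The linear arboricity `la(G)`: color classes are linear forests, i.e.
degree-2 forests. -/
def la (ends : E → Sym2 V) : ℕ := af ends fun _ => 2

/-- `G` is `k`-degenerate: every (induced, nonempty) subgraph has a vertex of
degree at most `k`. -/
def Degenerate (ends : E → Sym2 V) (k : ℕ) : Prop :=
  ∀ S : Finset V, S.Nonempty → ∃ v ∈ S, degreeIn ends S v ≤ k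

/-- An `f`-coloring: in each color class every vertex `v` has degree at most `f v`. -/
def FColoring (ends : E → Sym2 V) (f : V → ℕ) {k : ℕ} (C : E → Fin k) : Prop :=
  ∀ c : Fin k, ∀ v, degree (subEnds ends fun e => C e = c) v ≤ f v

/-- The `f`-chromatic index `χ'_f(G)`. -/
def fChromaticIndex (ends : E → Sym2 V) (f : V → ℕ) : ℕ :=
  sInf {k | ∃ C : E → Fin k, FColoring ends f C}

/-- `G` is bipartite: the vertices can be split into two sides so that every
edge has one endpoint on each side. -/
def Bipartite (ends : E → Sym2 V) : Prop :=
  ∃ P : V → Prop, ∀ e : E, ∃ u v, ends e = s(u, v) ∧ P u ∧ ¬ P v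

/-- The list analogue `χ'_{(g,h),ℓ}(G)`: the least `k` such that every list
assignment with lists of size at least `k` admits a coloring from the lists in
which each color class is `(g,h)`-orientable. -/
def ghListChromaticIndex (ends : E → Sym2 V) (g h : V → ℕ∞) : ℕ :=
  sInf {k | ∀ L : E → Finset ℕ, (∀ e, k ≤ (L e).card) →
    ∃ C : E → ℕ, (∀ e, C e ∈ L e) ∧
      ∀ c : ℕ, GHOrientable (subEnds ends fun e => C e = c) g h}

/-- The list degree-`f` pseudoarboricity `pa_{f,ℓ}(G)`. -/
def pafList (ends : E → Sym2 V) (f : V → ℕ) : ℕ :=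
  sInf {k | ∀ L : E → Finset ℕ, (∀ e, k ≤ (L e).card) →
    ∃ C : E → ℕ, (∀ e, C e ∈ L e) ∧
      ∀ c : ℕ, IsPseudoforest (subEnds ends fun e => C e = c) ∧
        ∀ v, degree (subEnds ends fun e => C e = c) v ≤ f v}

/-- The list `f`-chromatic index `χ'_{f,ℓ}(G)`. -/
def fListChromaticIndex (ends : E → Sym2 V) (f : V → ℕ) : ℕ :=
  sInf {k | ∀ L : E → Finset ℕ, (∀ e, k ≤ (L e).card) →
    ∃ C : E → ℕ, (∀ e, C e ∈ L e) ∧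
      ∀ c : ℕ, ∀ v, degree (subEnds ends fun e => C e = c) v ≤ f v}


/-!
If `d(v) ≤ k f(v)` for every `v`, it suffices to find a `k`-edge-colouring that is equitable:
at every vertex the degrees of any two colour classes differ by at most one. Take a colouring
minimising `∑_v ∑_c d_c(v)²`. If classes `c₁, c₂` were unbalanced at some vertex, recolour the
bipartite multigraph they span from an orientation in which out- and indegree differ by at most
one everywhere (edges leaving one side get `c₁`, the others `c₂`): this keeps
`d_{c₁}(v) + d_{c₂}(v)` at every vertex and lowers the potential. Such an orientation exists in any
multigraph: in one minimising `∑_v (d⁺(v) - d⁻(v))²`, reversing a trail from a vertex of excess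
at least `2` to a reachable vertex of negative excess would lower that potential.
The bound `χ'_f ≥ Δ_f` is counting: an `f`-colouring with `k` colours has `d(v) ≤ k f(v)`.
-/

end MG

namespace MG

section Orientation

variable {V E : Type}

inductive DirWalk (D : E → V × V) : V → List E → V → Prop
  | nil (u : V) : DirWalk D u [] u
  | cons {u w x : V} {e : E} {es : List E} :
      D e = (u, w) → DirWalk D w es x → DirWalk D u (e :: es) x

theorem DirWalk.append_split {D : E → V × V} {x : V} :
    ∀ {l₁ l₂ : List E} {u : V}, DirWalk D u (l₁ ++ l₂) x →
      ∃ m, DirWalk D u l₁ m ∧ DirWalk D m l₂ x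
  | [], _, u, h => ⟨u, .nil u, h⟩
  | _ :: _, _, _, .cons he hw =>
    let ⟨m, h₁, h₂⟩ := hw.append_split
    ⟨m, .cons he h₁, h₂⟩

theorem DirWalk.exists_nodup_of_reflTransGen {D : E → V × V} {u x : V}
    (h : Relation.ReflTransGen (fun a b => ∃ e, D e = (a, b)) u x) :
    ∃ es, DirWalk D u es x ∧ es.Nodup := by
  induction h using Relation.ReflTransGen.head_induction_on with
  | refl => exact ⟨[], .nil x, List.nodup_nil⟩
  | head hstep _ ih =>
    obtain ⟨e, he⟩ := hstep
    obtain ⟨es, hw, hnd⟩ := ih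
    by_cases hmem : e ∈ es
    · -- `e` recurs: drop the closed walk in front of its second occurrence
      obtain ⟨l₁, l₂, rfl⟩ := List.append_of_mem hmem
      obtain ⟨m, -, hw₂⟩ := hw.append_split
      cases hw₂ with
      | cons he' hw' =>
        obtain ⟨rfl, rfl⟩ := Prod.mk.inj (he'.symm.trans he)
        exact ⟨e :: l₂, .cons he hw', hnd.sublist (List.sublist_append_right _ _)⟩
    · exact ⟨e :: es, .cons he hw, List.nodup_cons.2 ⟨hmem, hnd⟩⟩

def flipOn (D : E → V × V) (F : Finset E) : E → V × V :=
  fun e => if e ∈ F then (D e).swap else D e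

theorem IsOrientation.flipOn {ends : E → Sym2 V} {D : E → V × V} (hD : IsOrientation ends D)
    (F : Finset E) : IsOrientation ends (flipOn D F) := by
  intro e
  unfold MG.flipOn
  split_ifs
  · exact Sym2.eq_swap.trans (hD e)
  · exact hD e

variable [DecidableEq V]

def arcExcess (p : V × V) (v : V) : ℤ :=
  (if p.1 = v then 1 else 0) - (if p.2 = v then 1 else 0)

theorem DirWalk.sum_arcExcess {D : E → V × V} {u x : V} {es : List E} (h : DirWalk D u es x)
    (v : V) : (es.map fun e => arcExcess (D e) v).sum =
      (if u = v then 1 else 0) - (if x = v then 1 else 0) := by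
  induction h with
  | nil => simp
  | cons he _ ih =>
    rw [List.map_cons, List.sum_cons, ih, he, arcExcess]
    ring

theorem IsOrientation.mult_eq {ends : E → Sym2 V} {D : E → V × V} (hD : IsOrientation ends D)
    (e : E) (v : V) :
    mult v (ends e) = (if (D e).1 = v then 1 else 0) + (if (D e).2 = v then 1 else 0) := by
  rw [← hD e]
  rfl

variable [Fintype E]

def excess (D : E → V × V) (v : V) : ℤ := ∑ e, arcExcess (D e) v

theorem excess_eq_outDeg_sub_inDeg (D : E → V × V) (v : V) :
    excess D v = outDeg D v - inDeg D v := by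
  simp only [excess, arcExcess, outDeg, inDeg, Finset.card_filter, Finset.sum_sub_distrib]
  push_cast
  rfl

theorem excess_flipOn (D : E → V × V) (F : Finset E) (v : V) :
    excess (flipOn D F) v = excess D v - 2 * ∑ e ∈ F, arcExcess (D e) v := by
  have hflip : ∀ e, arcExcess (flipOn D F e) v =
      arcExcess (D e) v - 2 * if e ∈ F then arcExcess (D e) v else 0 := by
    intro e
    unfold flipOn arcExcess
    split_ifs <;> simp_all
  simp only [excess, hflip, Finset.sum_sub_distrib, ← Finset.mul_sum, Finset.sum_ite_mem,
    Finset.univ_inter]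

theorem DirWalk.excess_flipOn {D : E → V × V} {u x : V} {es : List E} (h : DirWalk D u es x)
    (hnd : es.Nodup) (v : V) :
    excess (flipOn D es.toFinset) v =
      excess D v - 2 * ((if u = v then 1 else 0) - (if x = v then 1 else 0)) := by
  rw [MG.excess_flipOn, List.sum_toFinset _ hnd, h.sum_arcExcess]

theorem sum_excess_nonpos_of_closed (D : E → V × V) {R : Finset V}
    (hR : ∀ e, (D e).1 ∈ R → (D e).2 ∈ R) : ∑ v ∈ R, excess D v ≤ 0 := by
  simp only [excess]
  rw [Finset.sum_comm]
  refine Finset.sum_nonpos fun e _ => ?_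
  simp only [arcExcess, Finset.sum_sub_distrib, Finset.sum_ite_eq]
  have := hR e
  split_ifs <;> simp_all

variable [Fintype V]

theorem exists_reachable_excess_neg (D : E → V × V) {u : V} (hu : 0 < excess D u) :
    ∃ x, Relation.ReflTransGen (fun a b => ∃ e, D e = (a, b)) u x ∧ excess D x < 0 := by
  set R := Finset.univ.filter (Relation.ReflTransGen (fun a b => ∃ e, D e = (a, b)) u)
  have hclosed : ∀ e, (D e).1 ∈ R → (D e).2 ∈ R := fun e he => by
    simp only [R, Finset.mem_filter, Finset.mem_univ, true_and] at he ⊢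
    exact he.tail ⟨e, rfl⟩
  by_contra! hnonneg
  have hpos : 0 < ∑ v ∈ R, excess D v :=
    Finset.sum_pos' (fun v hv => hnonneg v (Finset.mem_filter.1 hv).2)
      ⟨u, Finset.mem_filter.2 ⟨Finset.mem_univ u, .refl⟩, hu⟩
  exact (sum_excess_nonpos_of_closed D hclosed).not_gt hpos

def excessPotential (D : E → V × V) : ℤ := ∑ v, excess D v ^ 2

theorem exists_flipOn_excessPotential_lt (D : E → V × V) {u : V} (hu : 2 ≤ excess D u) :
    ∃ F, excessPotential (flipOn D F) < excessPotential D := by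
  obtain ⟨x, hreach, hx⟩ := exists_reachable_excess_neg D (by omega : 0 < excess D u)
  obtain ⟨es, hw, hnd⟩ := DirWalk.exists_nodup_of_reflTransGen hreach
  have hux : u ≠ x := by rintro rfl; omega
  refine ⟨es.toFinset, Finset.sum_lt_sum (fun v _ => ?_) ⟨u, Finset.mem_univ u, ?_⟩⟩
  · rw [hw.excess_flipOn hnd]
    by_cases hvu : u = v
    · subst hvu; simp only [hux.symm, if_true, if_false]; nlinarith
    by_cases hvx : x = v
    · subst hvx; simp only [hux, if_true, if_false]; nlinarith
    · simp [hvu, hvx]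
  · rw [hw.excess_flipOn hnd]
    simp only [hux.symm, if_true, if_false]
    nlinarith

theorem excessPotential_flipOn_univ (D : E → V × V) :
    excessPotential (flipOn D Finset.univ) = excessPotential D := by
  have hneg : ∀ v, excess (flipOn D Finset.univ) v = -excess D v := fun v => by
    rw [excess_flipOn, ← excess]
    ring
  simp only [excessPotential, hneg, neg_sq]

theorem exists_balanced_orientation (ends : E → Sym2 V) :
    ∃ D, IsOrientation ends D ∧ ∀ v, outDeg D v ≤ inDeg D v + 1 ∧ inDeg D v ≤ outDeg D v + 1 := by
  let O := {D | IsOrientation ends D}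
  have hO : O.Nonempty := ⟨fun e => (ends e).out, fun e => Quot.out_eq (ends e)⟩
  have hle : ∀ D ∈ O, (∀ D' ∈ O, excessPotential D ≤ excessPotential D') →
      ∀ v, excess D v ≤ 1 := by
    intro D hD hmin v
    by_contra! hv
    obtain ⟨F, hF⟩ := exists_flipOn_excessPotential_lt D (by omega : 2 ≤ excess D v)
    exact (hmin _ (IsOrientation.flipOn hD F)).not_gt hF
  obtain ⟨D, hD, hmin⟩ := Set.exists_min_image O excessPotential (Set.toFinite O) hO
  have hrev := hle _ (IsOrientation.flipOn hD Finset.univ) fun D' hD' =>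
    (excessPotential_flipOn_univ D).trans_le (hmin D' hD')
  refine ⟨D, hD, fun v => ?_⟩
  have h₁ := hle D hD hmin v
  have h₂ := hrev v
  rw [excess_flipOn, ← excess] at h₂
  rw [excess_eq_outDeg_sub_inDeg] at h₁ h₂
  omega

end Orientation

section Degrees

variable {V E : Type} [DecidableEq V] [Fintype E]

theorem degree_subEnds (ends : E → Sym2 V) (P : E → Prop) [DecidablePred P]
    [Fintype {e // P e}] (v : V) :
    degree (subEnds ends P) v = ∑ e, if P e then mult v (ends e) else 0 := by
  rw [degree, ← Finset.sum_filter]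
  exact (Finset.sum_subtype _ (fun _ => by simp) fun e => mult v (ends e)).symm

theorem degree_subEnds_congr (ends : E → Sym2 V) {P P' : E → Prop} [Fintype {e // P e}]
    [Fintype {e // P' e}] (h : ∀ e, P e ↔ P' e) (v : V) :
    degree (subEnds ends P) v = degree (subEnds ends P') v := by
  obtain rfl : P = P' := funext fun e => propext (h e)
  rw [degree_subEnds, degree_subEnds]

theorem degree_subEnds_add_not (ends : E → Sym2 V) (P : E → Prop) [Fintype {e // P e}]
    [Fintype {e // ¬P e}] (v : V) :
    degree (subEnds ends P) v + degree (subEnds ends fun e => ¬P e) v = degree ends v := by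
  rw [degree_subEnds, degree_subEnds, ← Finset.sum_add_distrib]
  exact Finset.sum_congr rfl fun e _ => by split_ifs <;> simp

theorem degree_subEnds_subEnds (ends : E → Sym2 V) {S : E → Prop} [Fintype {e // S e}]
    {Q : {e // S e} → Prop} [Fintype {x // Q x}] {P : E → Prop} [Fintype {e // P e}]
    (hP : ∀ e, P e ↔ ∃ h : S e, Q ⟨e, h⟩) (v : V) :
    degree (subEnds ends P) v = degree (subEnds (subEnds ends S) Q) v := by
  have hS : ∀ e ∈ Finset.univ, (if P e then mult v (ends e) else 0) ≠ 0 → S e :=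
    fun e _ he => ((hP e).1 (by_contra fun hPe => he (if_neg hPe))).1
  rw [degree_subEnds, degree_subEnds, ← Finset.sum_filter_of_ne hS,
    Finset.sum_subtype (p := S) (F := inferInstance) _ (fun _ => by simp)]
  exact Finset.sum_congr rfl fun x _ => by simp only [hP, subEnds, x.2, exists_true_left]

theorem degree_eq_sum_subEnds (ends : E → Sym2 V) {α : Type} [Fintype α] [DecidableEq α]
    (C : E → α) (v : V) : degree ends v = ∑ c, degree (subEnds ends fun e => C e = c) v := by
  simp only [degree_subEnds]
  rw [Finset.sum_comm, degree]
  exact Finset.sum_congr rfl fun e _ => (Fintype.sum_ite_eq (C e) fun _ => mult v (ends e)).symm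

theorem mult_le_degree (ends : E → Sym2 V) (e : E) (v : V) : mult v (ends e) ≤ degree ends v :=
  Finset.single_le_sum (f := fun e => mult v (ends e)) (fun _ _ => Nat.zero_le _)
    (Finset.mem_univ e)

theorem IsOrientation.degree_eq_outDeg_add_inDeg {ends : E → Sym2 V} {D : E → V × V}
    (hD : IsOrientation ends D) (v : V) : degree ends v = outDeg D v + inDeg D v := by
  rw [degree, outDeg, inDeg, Finset.card_filter, Finset.card_filter, ← Finset.sum_add_distrib]
  exact Finset.sum_congr rfl fun e _ => hD.mult_eq e v

end Degrees

theorem sq_add_sq_le_of_balanced {x y a b : ℕ} (hsum : x + y = a + b) (hx : x ≤ y + 1)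
    (hy : y ≤ x + 1) : x ^ 2 + y ^ 2 ≤ a ^ 2 + b ^ 2 := by
  zify at *
  nlinarith [sq_nonneg ((a : ℤ) - b), sq_nonneg ((x : ℤ) - y)]

theorem sq_add_sq_lt_of_balanced {x y a b : ℕ} (hsum : x + y = a + b) (hx : x ≤ y + 1)
    (hy : y ≤ x + 1) (hab : b + 2 ≤ a) : x ^ 2 + y ^ 2 < a ^ 2 + b ^ 2 := by
  zify at *
  nlinarith

theorem sum_sq_le_of_rebalance {β : Type} [Fintype β] [DecidableEq β] {a b : β → ℕ} {i j : β}
    (hij : i ≠ j) (hrest : ∀ c, c ≠ i → c ≠ j → b c = a c) (hsum : b i + b j = a i + a j)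
    (hbal : b i ≤ b j + 1 ∧ b j ≤ b i + 1) :
    ∑ c, b c ^ 2 ≤ ∑ c, a c ^ 2 ∧ (a j + 2 ≤ a i → ∑ c, b c ^ 2 < ∑ c, a c ^ 2) := by
  have hsplit : ∀ g : β → ℕ, ∑ c, g c = g i + g j + ∑ c ∈ {i, j}ᶜ, g c := fun g => by
    rw [← Finset.sum_add_sum_compl {i, j} g, Finset.sum_pair hij]
  have hcompl : ∑ c ∈ {i, j}ᶜ, b c ^ 2 = ∑ c ∈ {i, j}ᶜ, a c ^ 2 :=
    Finset.sum_congr rfl fun c hc => by rw [hrest c (by simp_all) (by simp_all)]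
  rw [hsplit fun c => b c ^ 2, hsplit fun c => a c ^ 2, hcompl]
  exact ⟨by grw [sq_add_sq_le_of_balanced hsum hbal.1 hbal.2],
    fun h => by grw [sq_add_sq_lt_of_balanced hsum hbal.1 hbal.2 h]⟩

section Recoloring

variable {E α : Type} [DecidableEq α]

def recolorPair (C : E → α) (c₁ c₂ : α) (Q : {e // C e = c₁ ∨ C e = c₂} → Prop) : E → α :=
  fun e => if h : C e = c₁ ∨ C e = c₂ then (if Q ⟨e, h⟩ then c₁ else c₂) else C e

variable {C : E → α} {c₁ c₂ : α} {Q : {e // C e = c₁ ∨ C e = c₂} → Prop} {e : E}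

theorem recolorPair_eq_iff_of_ne {c : α} (h₁ : c ≠ c₁) (h₂ : c ≠ c₂) :
    recolorPair C c₁ c₂ Q e = c ↔ C e = c := by
  unfold recolorPair
  split_ifs with h hq
  · exact ⟨fun h' => absurd h'.symm h₁, fun h' => by rcases h with h | h <;> simp_all⟩
  · exact ⟨fun h' => absurd h'.symm h₂, fun h' => by rcases h with h | h <;> simp_all⟩
  · rfl

theorem recolorPair_eq_left_iff (hc : c₁ ≠ c₂) :
    recolorPair C c₁ c₂ Q e = c₁ ↔ ∃ h, Q ⟨e, h⟩ := by
  unfold recolorPair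
  split_ifs with h hq
  · exact iff_of_true rfl ⟨h, hq⟩
  · exact iff_of_false hc.symm fun ⟨_, hq'⟩ => hq hq'
  · exact iff_of_false (fun h' => h (Or.inl h')) fun ⟨h', _⟩ => h h'

theorem recolorPair_eq_right_iff (hc : c₁ ≠ c₂) :
    recolorPair C c₁ c₂ Q e = c₂ ↔ ∃ h, ¬Q ⟨e, h⟩ := by
  unfold recolorPair
  split_ifs with h hq
  · exact iff_of_false hc fun ⟨_, hq'⟩ => hq' hq
  · exact iff_of_true rfl ⟨h, hq⟩
  · exact iff_of_false (fun h' => h (Or.inr h')) fun ⟨h', _⟩ => h h'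

end Recoloring

section Bipartite

variable {V E : Type}

theorem Bipartite.subgraph {ends : E → Sym2 V} (hG : Bipartite ends) (S : E → Prop) :
    Bipartite (subEnds ends S) :=
  let ⟨P, hP⟩ := hG
  ⟨P, fun x => hP x.1⟩

theorem IsOrientation.tail_side_iff_not_head_side {ends : E → Sym2 V} {D : E → V × V}
    (hD : IsOrientation ends D) {P : V → Prop} (hP : ∀ e, ∃ a b, ends e = s(a, b) ∧ P a ∧ ¬P b)
    (e : E) : P (D e).1 ↔ ¬P (D e).2 := by
  obtain ⟨a, b, hab, ha, hb⟩ := hP e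
  rcases Sym2.eq_iff.1 ((hD e).trans hab) with ⟨h₁, h₂⟩ | ⟨h₁, h₂⟩ <;> simp_all

variable [DecidableEq V] [Fintype E]

theorem IsOrientation.degree_subEnds_tail_side {ends : E → Sym2 V} {D : E → V × V}
    (hD : IsOrientation ends D) {P : V → Prop} (hP : ∀ e, ∃ a b, ends e = s(a, b) ∧ P a ∧ ¬P b)
    (v : V) :
    degree (subEnds ends fun e => P (D e).1) v = if P v then outDeg D v else inDeg D v := by
  rw [degree_subEnds]
  split_ifs with hv
  all_goals
    simp only [outDeg, inDeg, Finset.card_filter]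
    refine Finset.sum_congr rfl fun e _ => ?_
    have hside := hD.tail_side_iff_not_head_side hP e
    rw [hD.mult_eq]
    by_cases h₁ : P (D e).1 <;> by_cases h₂ : (D e).1 = v <;> by_cases h₃ : (D e).2 = v <;>
      simp_all

variable [Fintype V]

theorem Bipartite.exists_equitable_two_coloring {ends : E → Sym2 V} (hG : Bipartite ends) :
    ∃ Q : E → Prop, ∀ v, degree (subEnds ends Q) v ≤ degree (subEnds ends fun e => ¬Q e) v + 1 ∧
      degree (subEnds ends fun e => ¬Q e) v ≤ degree (subEnds ends Q) v + 1 := by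
  obtain ⟨P, hP⟩ := hG
  obtain ⟨D, hD, hbal⟩ := exists_balanced_orientation ends
  refine ⟨fun e => P (D e).1, fun v => ?_⟩
  have hsplit := degree_subEnds_add_not ends (fun e => P (D e).1) v
  have hside := hD.degree_subEnds_tail_side hP v
  rw [hD.degree_eq_outDeg_add_inDeg] at hsplit
  have := hbal v
  dsimp only at hsplit hside ⊢
  split_ifs at hside <;> omega

variable {α : Type} [DecidableEq α]

theorem Bipartite.exists_recoloring_balanced {ends : E → Sym2 V} (hG : Bipartite ends)
    (C : E → α) {c₁ c₂ : α} (hc : c₁ ≠ c₂) :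
    ∃ C' : E → α, (∀ e c, c ≠ c₁ → c ≠ c₂ → (C' e = c ↔ C e = c)) ∧ ∀ v,
      degree (subEnds ends fun e => C' e = c₁) v + degree (subEnds ends fun e => C' e = c₂) v =
        degree (subEnds ends fun e => C e = c₁) v + degree (subEnds ends fun e => C e = c₂) v ∧
      degree (subEnds ends fun e => C' e = c₁) v ≤
        degree (subEnds ends fun e => C' e = c₂) v + 1 ∧
      degree (subEnds ends fun e => C' e = c₂) v ≤
        degree (subEnds ends fun e => C' e = c₁) v + 1 := by
  obtain ⟨Q, hQ⟩ := (hG.subgraph fun e => C e = c₁ ∨ C e = c₂).exists_equitable_two_coloring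
  refine ⟨recolorPair C c₁ c₂ Q, fun e c => recolorPair_eq_iff_of_ne, fun v => ?_⟩
  rw [degree_subEnds_subEnds ends (Q := Q) fun e => recolorPair_eq_left_iff hc,
    degree_subEnds_subEnds ends (Q := fun x => ¬Q x) fun e => recolorPair_eq_right_iff hc,
    degree_subEnds_subEnds ends (Q := fun x : {e // C e = c₁ ∨ C e = c₂} => C x.1 = c₁)
      fun e => ⟨fun h => ⟨Or.inl h, h⟩, fun ⟨_, h⟩ => h⟩,
    degree_subEnds_subEnds ends (Q := fun x : {e // C e = c₁ ∨ C e = c₂} => ¬C x.1 = c₁)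
      fun e => ⟨fun h => ⟨Or.inr h, h ▸ hc.symm⟩, fun ⟨h, h'⟩ => h.resolve_left h'⟩,
    degree_subEnds_add_not, degree_subEnds_add_not]
  exact ⟨rfl, hQ v⟩

variable [Fintype α]

def colorPotential (ends : E → Sym2 V) (C : E → α) : ℕ :=
  ∑ v, ∑ c, degree (subEnds ends fun e => C e = c) v ^ 2

theorem Bipartite.exists_equitable_coloring [Nonempty α] {ends : E → Sym2 V}
    (hG : Bipartite ends) :
    ∃ C : E → α, ∀ (v : V) (c c' : α), degree (subEnds ends fun e => C e = c) v ≤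
      degree (subEnds ends fun e => C e = c') v + 1 := by
  obtain ⟨C, hmin⟩ := Finite.exists_min (colorPotential (α := α) ends)
  refine ⟨C, fun w c₁ c₂ => ?_⟩
  by_contra! hw
  have hc : c₁ ≠ c₂ := by rintro rfl; omega
  obtain ⟨C', hrest, hbal⟩ := hG.exists_recoloring_balanced C hc
  have hrebalance := fun v => sum_sq_le_of_rebalance hc
    (fun c h₁ h₂ => degree_subEnds_congr ends (fun e => hrest e c h₁ h₂) v) (hbal v).1 (hbal v).2
  have hlt : colorPotential ends C' < colorPotential ends C :=
    Finset.sum_lt_sum (fun v _ => (hrebalance v).1)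
      ⟨w, Finset.mem_univ w, (hrebalance w).2 (by omega)⟩
  exact (hmin C').not_gt hlt

theorem Bipartite.exists_fColoring {ends : E → Sym2 V} (hG : Bipartite ends) {f : V → ℕ} {k : ℕ}
    (hdeg : ∀ v, degree ends v ≤ k * f v) : ∃ C : E → Fin k, FColoring ends f C := by
  rcases Nat.eq_zero_or_pos k with rfl | hk
  · have : IsEmpty E := ⟨fun e => by
      obtain ⟨P, hP⟩ := hG
      obtain ⟨u, w, he, -⟩ := hP e
      have := (mult_le_degree ends e u).trans (hdeg u)
      rw [he, zero_mul] at this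
      simp [mult] at this⟩
    exact ⟨isEmptyElim, fun c => c.elim0⟩
  · have : NeZero k := ⟨hk.ne'⟩
    obtain ⟨C, hC⟩ := hG.exists_equitable_coloring (α := Fin k)
    refine ⟨C, fun c v => ?_⟩
    by_contra! hc
    have : k * f v < degree ends v := by
      rw [degree_eq_sum_subEnds ends C v]
      calc k * f v = ∑ _c : Fin k, f v := by simp
        _ < _ := Finset.sum_lt_sum (fun c' _ => by have := hC v c c'; omega)
          ⟨c, Finset.mem_univ c, hc⟩
    exact this.not_ge (hdeg v)

end Bipartite

theorem cdiv_le_iff {a b k : ℕ} (hb : 0 < b) : cdiv a b ≤ k ↔ a ≤ k * b := by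
  rw [cdiv, Nat.div_le_iff_le_mul_add_pred hb, mul_comm]
  omega

section FMaxDegree

variable {V E : Type} [DecidableEq V] [Fintype E]

theorem FColoring.degree_le {ends : E → Sym2 V} {f : V → ℕ} {k : ℕ} {C : E → Fin k}
    (hC : FColoring ends f C) (v : V) : degree ends v ≤ k * f v := by
  rw [degree_eq_sum_subEnds ends C v]
  calc _ ≤ ∑ _c : Fin k, f v := Finset.sum_le_sum fun c _ => hC c v
    _ = k * f v := by simp

theorem fMaxDegree_le_iff [Fintype V] {ends : E → Sym2 V} {f : V → ℕ} (hf : ∀ v, 1 ≤ f v)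
    {k : ℕ} : fMaxDegree ends f ≤ k ↔ ∀ v, degree ends v ≤ k * f v := by
  simp only [fMaxDegree, Finset.sup_le_iff, Finset.mem_univ, true_implies, cdiv_le_iff (hf _)]

end FMaxDegree

/-- Corollary 3.9(i), Hakimi–Kariv: for every bipartite multigraph
`G` and `f` with `f(v) ≥ 1` everywhere, `χ'_f(G) = Δ_f(G)`. -/
theorem fChromaticIndex_of_bipartite {V E : Type} [Fintype V] [Fintype E] [DecidableEq V]
    (ends : E → Sym2 V) (f : V → ℕ) (hf : ∀ v, 1 ≤ f v) (hbip : Bipartite ends) :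
    fChromaticIndex ends f = fMaxDegree ends f := by
  obtain ⟨C, hC⟩ := hbip.exists_fColoring ((fMaxDegree_le_iff hf).1 le_rfl)
  refine le_antisymm (Nat.sInf_le ⟨C, hC⟩) (le_csInf ⟨_, C, hC⟩ ?_)
  rintro k ⟨C', hC'⟩
  exact (fMaxDegree_le_iff hf).2 hC'.degree_le

end MG
end
end

section
/- For every multigraph G and every function f : V(G) → ℕ with f(v) ≥ 2 for all v, the list degree-f pseudoarboricity equals the degree-f pseudoarboricity: pa_{f,ℓ}(G) = pa_f(G). -/
open Classical

noncomputable section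

/-!
Orient each colour class of an optimal colouring by degree-`f` pseudoforests so that every vertex
has indegree at most `1` (Hall's theorem: a pseudoforest spans at most `|S|` edges on any vertex
set `S`) and outdegree at most `f v - 1` (reverse directed paths from overloaded vertices to
vertices with spare outdegree). Splitting each vertex `v` into `f v - 1` tails and one head makes
every colour class a matching, so the colouring becomes a proper edge colouring of a bipartite
multigraph. By Galvin's theorem, lists of that size admit a proper list colouring of the bipartite
multigraph, and merging the split vertices again turns it into a colouring by degree-`f`
pseudoforests. The reverse inequality holds because identical lists `{0, …, k - 1}` are allowed.
-/

namespace MG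

open Finset Relation

section Components

variable {V E : Type} {ends : E → Sym2 V}

lemma Adj.symm {u v : V} (h : Adj ends u v) : Adj ends v u := by
  obtain ⟨e, he⟩ := h
  exact ⟨e, he.trans Sym2.eq_swap⟩

lemma Reaches.symm {u v : V} (h : Reaches ends u v) : Reaches ends v u := by
  induction h with
  | refl => exact .refl
  | tail _ hab ih => exact .head hab.symm ih

lemma adj_of_mem {e : E} {a b : V} (ha : a ∈ ends e) (hb : b ∈ ends e) :
    a = b ∨ Adj ends a b := by
  induction h : ends e using Sym2.ind generalizing a b with
  | h x y =>
    rw [h, Sym2.mem_iff] at ha hb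
    rcases ha with rfl | rfl <;> rcases hb with rfl | rfl
    · exact .inl rfl
    · exact .inr ⟨e, h⟩
    · exact .inr ⟨e, h.trans Sym2.eq_swap⟩
    · exact .inl rfl

lemma Reaches.of_mem {e : E} {u a b : V} (hu : Reaches ends u a) (ha : a ∈ ends e)
    (hb : b ∈ ends e) : Reaches ends u b := by
  rcases adj_of_mem ha hb with rfl | hab
  exacts [hu, hu.tail hab]

lemma _root_.Relation.ReflTransGen.exists_boundary {α : Type*} {r : α → α → Prop} {p : α → Prop}
    {a b : α}    (h : ReflTransGen r a b) (ha : p a) (hb : ¬ p b) :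
    ∃ x y, p x ∧ ¬ p y ∧ r x y ∧ ReflTransGen r a y := by
  induction h with
  | refl => exact absurd ha hb
  | @tail c d hac hcd ih =>
    by_cases hc : p c
    · exact ⟨c, d, hc, hb, hcd, hac.tail hcd⟩
    · exact ih hc

lemma mem_component [Fintype V] {u v : V} : u ∈ component ends v ↔ Reaches ends v u := by
  simp [component]

variable [Fintype V] [Fintype E] [DecidableEq V]

lemma edgesWithin_lt_insert {S : Finset V} {e : E} {w : V} (hw : w ∈ ends e) (hwS : w ∉ S)
    (he : ∀ v ∈ ends e, v ∈ insert w S) :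
    edgesWithin ends S < edgesWithin ends (insert w S) := by
  refine card_lt_card ⟨fun e' he' => mem_filter.mpr ⟨mem_univ e', fun v hv =>
    mem_insert_of_mem ((mem_filter.mp he').2 v hv)⟩, fun hsub => hwS ?_⟩
  exact (mem_filter.mp (hsub (mem_filter.mpr ⟨mem_univ e, he⟩))).2 w hw

/-- Growing a nonempty `S` inside a component by adjacent vertices adds at least one edge per
vertex. -/
lemma edgesWithin_add_card_component_le {S : Finset V} {s v : V} (hs : s ∈ S)
    (hS : S ⊆ component ends v) :
    edgesWithin ends S + (component ends v).card ≤
      edgesWithin ends (component ends v) + S.card := by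
  induction hn : (component ends v).card - S.card generalizing S with
  | zero => rw [eq_of_subset_of_card_le hS (by omega)]
  | succ n ih =>
    obtain ⟨c, hcC, hcS⟩ := exists_of_ssubset (ssubset_of_subset_of_ne hS (by rintro rfl; omega))
    have hsc : Reaches ends s c :=
      (mem_component.mp (hS hs)).symm.trans (mem_component.mp hcC)
    obtain ⟨x, w, hxS, hwS, ⟨e, he⟩, hsw⟩ := hsc.exists_boundary hs hcS
    have hwe : w ∈ ends e := he ▸ Sym2.mem_mk_right x w
    have hlt : edgesWithin ends S < edgesWithin ends (insert w S) := by
      refine edgesWithin_lt_insert hwe hwS fun u hu => ?_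
      rw [he, Sym2.mem_iff] at hu
      rcases hu with rfl | rfl
      exacts [mem_insert_of_mem hxS, mem_insert_self _ _]
    have hwC : w ∈ component ends v := mem_component.mpr ((mem_component.mp (hS hs)).trans hsw)
    have := ih (mem_insert_of_mem hs) (insert_subset hwC hS)
      (by rw [card_insert_of_notMem hwS]; omega)
    rw [card_insert_of_notMem hwS] at this
    omega

lemma IsPseudoforest.edgesWithin_le_card (hpf : IsPseudoforest ends) (S : Finset V) :
    edgesWithin ends S ≤ S.card := by
  induction S using strongInduction with
  | H S ih =>
  obtain rfl | ⟨s, hs⟩ := S.eq_empty_or_nonempty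
  · simpa [edgesWithin] using fun e => ⟨_, Sym2.out_fst_mem (ends e)⟩
  set C := component ends s
  have hsplit : edgesWithin ends S ≤
      edgesWithin ends (S.filter (· ∈ C)) + edgesWithin ends (S.filter (· ∉ C)) := by
    refine (card_le_card fun e he => ?_).trans (card_union_le _ _)
    have heS := (mem_filter.mp he).2
    obtain ⟨a, ha⟩ : ∃ a, a ∈ ends e := ⟨_, Sym2.out_fst_mem _⟩
    by_cases haC : a ∈ C
    · refine mem_union_left _ (mem_filter.mpr ⟨mem_univ e, fun v hv => ?_⟩)
      exact mem_filter.mpr ⟨heS v hv, mem_component.mpr ((mem_component.mp haC).of_mem ha hv)⟩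
    · refine mem_union_right _ (mem_filter.mpr ⟨mem_univ e, fun v hv => ?_⟩)
      exact mem_filter.mpr ⟨heS v hv, fun hvC =>
        haC (mem_component.mpr ((mem_component.mp hvC).of_mem hv ha))⟩
  have h₁ := edgesWithin_add_card_component_le (S := S.filter (· ∈ C))
    (mem_filter.mpr ⟨hs, mem_component.mpr .refl⟩) fun _ hx => (mem_filter.mp hx).2
  have h₂ := ih (S.filter (· ∉ C))
    (filter_ssubset.mpr ⟨s, hs, fun h => h (mem_component.mpr .refl)⟩)
  have := hpf s
  have := card_filter_add_card_filter_not (s := S) (· ∈ C)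
  omega

end Components

section Orientation

variable {V E : Type} {ends : E → Sym2 V} {D : E → V × V}

lemma exists_isOrientation (ends : E → Sym2 V) : ∃ D, IsOrientation ends D :=
  ⟨fun e => (ends e).out, fun e => Quot.out_eq (ends e)⟩

lemma IsOrientation.snd_mem (hD : IsOrientation ends D) (e : E) : (D e).2 ∈ ends e :=
  hD e ▸ Sym2.mem_mk_right _ _

variable [Fintype E] [DecidableEq V]

lemma IsOrientation.degree_eq (hD : IsOrientation ends D) (v : V) :
    degree ends v = outDeg D v + inDeg D v := by
  simp only [degree, outDeg, inDeg, card_filter, ← sum_add_distrib]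
  exact sum_congr rfl fun e _ => by rw [← hD e]; rfl

lemma inDeg_le_one_iff : (∀ v, inDeg D v ≤ 1) ↔ Function.Injective fun e => (D e).2 := by
  simp only [inDeg, card_le_one, mem_filter, mem_univ, true_and]
  exact ⟨fun h e e' he => h _ e rfl e' he.symm, fun h v e he e' he' => h (he.trans he'.symm)⟩

lemma isPseudoforest_of_inDeg_le_one [Fintype V] (hD : IsOrientation ends D)
    (hin : ∀ v, inDeg D v ≤ 1) : IsPseudoforest ends := fun _ =>
  card_le_card_of_injOn (fun e => (D e).2) (fun e he => (mem_filter.mp he).2 _ (hD.snd_mem e))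
    (inDeg_le_one_iff.mp hin).injOn

lemma IsPseudoforest.exists_orientation_inDeg_le_one [Fintype V] (hpf : IsPseudoforest ends) :
    ∃ D, IsOrientation ends D ∧ ∀ v, inDeg D v ≤ 1 := by
  have hall (F : Finset E) : F.card ≤ (F.biUnion fun e => univ.filter (· ∈ ends e)).card :=
    le_trans (b := edgesWithin ends (F.biUnion fun e => univ.filter (· ∈ ends e)))
      (card_le_card fun e he => mem_filter.mpr ⟨mem_univ e, fun v hv =>
        mem_biUnion.mpr ⟨e, he, mem_filter.mpr ⟨mem_univ v, hv⟩⟩⟩)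
      (hpf.edgesWithin_le_card _)
  obtain ⟨h, hinj, hmem⟩ := (all_card_le_biUnion_card_iff_exists_injective _).mp hall
  have hmem' e : h e ∈ ends e := (mem_filter.mp (hmem e)).2
  refine ⟨fun e => (Sym2.Mem.other (hmem' e), h e), fun e => ?_, inDeg_le_one_iff.mpr hinj⟩
  exact Sym2.eq_swap.trans (Sym2.other_spec (hmem' e))

end Orientation

section Reorientation

variable {V E : Type} {ends : E → Sym2 V} {D : E → V × V} {e₀ : E} {u w : V} {f : V → ℕ}

def Arc (D : E → V × V) (X : Finset E) (a b : V) : Prop := ∃ e ∈ X, D e = (a, b)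

lemma one_le_inDeg [Fintype E] [DecidableEq V] (he₀ : D e₀ = (u, w)) : 1 ≤ inDeg D w :=
  card_pos.mpr ⟨e₀, mem_filter.mpr ⟨mem_univ _, by rw [he₀]⟩⟩

/-- The vertices reachable from `u` carry no more outgoing than incoming edges, so when `u` has
no incoming edge and outdegree `≥ 2`, one of them has outdegree `≤ f - 2`. -/
lemma exists_reaches_outDeg_add_two_le [Fintype V] [Fintype E] [DecidableEq V]
    (hf : ∀ v, 2 ≤ f v) (hin : ∀ v, inDeg D v ≤ 1)
    (hu0 : inDeg D u = 0) (hu : f u ≤ outDeg D u) :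
    ∃ y, ReflTransGen (Arc D univ) u y ∧ outDeg D y + 2 ≤ f y := by
  by_contra! h
  set S := univ.filter (ReflTransGen (Arc D univ) u)
  have huS : u ∈ S := mem_filter.mpr ⟨mem_univ u, .refl⟩
  have hclosed : #{e | (D e).1 ∈ S} ≤ #{e | (D e).2 ∈ S} :=
    card_le_card fun e he => mem_filter.mpr ⟨mem_univ e, mem_filter.mpr
      ⟨mem_univ _, (mem_filter.mp (mem_filter.mp he).2).2.tail ⟨e, mem_univ e, rfl⟩⟩⟩
  have hlt : ∑ v ∈ S, inDeg D v < ∑ v ∈ S, outDeg D v := by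
    refine sum_lt_sum (fun v hv => ?_) ⟨u, huS, by have := hf u; omega⟩
    have := h v (mem_filter.mp hv).2
    have := hin v
    have := hf v
    omega
  simp only [inDeg, outDeg, sum_card_fiberwise_eq_card_filter] at hlt
  omega

variable [DecidableEq E]

lemma card_filter_update_add [Fintype E] {β γ : Type} [DecidableEq γ] (π : β → γ) (g : E → β)
    (a : E) (x : β) (c : γ) :
    #{i | π (Function.update g a x i) = c} + (if π (g a) = c then 1 else 0) =
      #{i | π (g i) = c} + (if π x = c then 1 else 0) := by
  simp only [card_filter, Function.apply_update (fun _ y => if π y = c then 1 else 0),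
    sum_update_of_mem (mem_univ a)]
  rw [sum_eq_add_sum_sdiff_singleton_of_mem (mem_univ a)]
  ring

lemma IsOrientation.update_swap (hD : IsOrientation ends D) (e₀ : E) :
    IsOrientation ends (Function.update D e₀ (D e₀).swap) := by
  intro e
  rcases eq_or_ne e e₀ with rfl | he
  · rw [Function.update_self, ← hD e]
    exact Sym2.eq_swap
  · rw [Function.update_of_ne he]
    exact hD e

lemma reflTransGen_arc_erase {X : Finset E} {a b : V} (e₀ : E)
    (h : ReflTransGen (Arc D X) a b) :
    ReflTransGen (Arc D (X.erase e₀)) a b ∨ ReflTransGen (Arc D (X.erase e₀)) (D e₀).2 b := by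
  induction h with
  | refl => exact .inl .refl
  | @tail c d _ hcd ih =>
    obtain ⟨e, heX, he⟩ := hcd
    rcases eq_or_ne e e₀ with rfl | hne
    · exact .inr (by rw [he])
    · have hcd' : Arc D (X.erase e₀) c d := ⟨e, mem_erase.mpr ⟨hne, heX⟩, he⟩
      exact ih.imp (·.tail hcd') (·.tail hcd')

lemma arc_update_erase (e₀ : E) (X : Finset E) (p : V × V) :
    Arc (Function.update D e₀ p) (X.erase e₀) = Arc D (X.erase e₀) := by
  ext a b
  refine exists_congr fun e => and_congr_right fun he => ?_
  rw [Function.update_of_ne (ne_of_mem_erase he)]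

variable [Fintype E] [DecidableEq V]

lemma outDeg_update_add (he₀ : D e₀ = (u, w)) (v : V) :
    outDeg (Function.update D e₀ (w, u)) v + (if u = v then 1 else 0) =
      outDeg D v + (if w = v then 1 else 0) := by
  have h := card_filter_update_add Prod.fst D e₀ (w, u) v
  rwa [he₀] at h

lemma inDeg_update_add (he₀ : D e₀ = (u, w)) (v : V) :
    inDeg (Function.update D e₀ (w, u)) v + (if w = v then 1 else 0) =
      inDeg D v + (if u = v then 1 else 0) := by
  have h := card_filter_update_add Prod.snd D e₀ (w, u) v
  rwa [he₀] at h

lemma inDeg_update_le_one (he₀ : D e₀ = (u, w)) (hin : ∀ v, inDeg D v ≤ 1)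
    (hu0 : inDeg D u = 0) (v : V) : inDeg (Function.update D e₀ (w, u)) v ≤ 1 := by
  have huw : u ≠ w := by have := one_le_inDeg he₀; rintro rfl; omega
  have h := inDeg_update_add he₀ v
  have := hin v
  obtain rfl | hvu := eq_or_ne v u
  · simp [huw.symm] at h; omega
  obtain rfl | hvw := eq_or_ne v w
  · simp [huw] at h; omega
  · simp [hvu.symm, hvw.symm] at h; omega

variable [Fintype V]

def outExcess (f : V → ℕ) (D : E → V × V) : ℕ := ∑ v, (outDeg D v - (f v - 1))

/-- Reversing an edge out of a vertex `u` of outdegree `f u` repairs `u` and overloads the head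
`w` exactly when `w` had no spare outdegree. -/
lemma outExcess_update_add (hdeg : ∀ v, outDeg D v + inDeg D v ≤ f v) (he₀ : D e₀ = (u, w))
    (hu : f u ≤ outDeg D u) :
    outExcess f (Function.update D e₀ (w, u)) + 1 =
      outExcess f D + if f w ≤ outDeg D w + 1 then 1 else 0 := by
  have huw : u ≠ w := by have := one_le_inDeg he₀; have := hdeg u; rintro rfl; omega
  have hterm v : (outDeg (Function.update D e₀ (w, u)) v - (f v - 1)) + (if u = v then 1 else 0) =
      (outDeg D v - (f v - 1)) + if w = v then (if f w ≤ outDeg D w + 1 then 1 else 0) else 0 := by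
    have h := outDeg_update_add he₀ v
    obtain rfl | hvu := eq_or_ne v u
    · simp [huw.symm] at h ⊢; omega
    obtain rfl | hvw := eq_or_ne v w
    · have := hdeg v
      have := one_le_inDeg he₀
      simp [huw] at h ⊢; split_ifs <;> omega
    · simp [hvu.symm, hvw.symm] at h ⊢; omega
  simpa [outExcess, sum_add_distrib] using sum_congr rfl fun v (_ : v ∈ univ) => hterm v

/-- Reversing a directed path from a vertex of outdegree `≥ f` to a vertex of outdegree
`≤ f - 2` lowers `outExcess`. The path is reversed one edge at a time, the overloaded vertex
moving along it. -/
lemma exists_outExcess_lt (hdeg : ∀ v, degree ends v ≤ f v) (X : Finset E) :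
    ∀ D, IsOrientation ends D → (∀ v, inDeg D v ≤ 1) → ∀ {u y},
    f u ≤ outDeg D u → outDeg D y + 2 ≤ f y → ReflTransGen (Arc D X) u y →
    ∃ D', IsOrientation ends D' ∧ (∀ v, inDeg D' v ≤ 1) ∧ outExcess f D' < outExcess f D := by
  induction X using strongInduction with
  | H X ih =>
  intro D hD hin u y hu hy huy
  have hdeg' v : outDeg D v + inDeg D v ≤ f v := hD.degree_eq v ▸ hdeg v
  obtain rfl | ⟨w, ⟨e₀, he₀X, he₀⟩, hwy⟩ := huy.cases_head
  · omega
  have hu0 : inDeg D u = 0 := by have := hdeg' u; omega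
  have hD' : IsOrientation ends (Function.update D e₀ (w, u)) := by
    simpa [he₀] using hD.update_swap e₀
  have hin' := inDeg_update_le_one he₀ hin hu0
  have hexcess := outExcess_update_add hdeg' he₀ hu
  by_cases hw : outDeg D w + 2 ≤ f w
  · exact ⟨_, hD', hin', by rw [if_neg (by omega)] at hexcess; omega⟩
  -- The part of the walk after its last use of `e₀` starts at `w` and survives the reversal.
  have hwy' : ReflTransGen (Arc (Function.update D e₀ (w, u)) (X.erase e₀)) w y := by
    rw [arc_update_erase]
    simpa [he₀] using reflTransGen_arc_erase e₀ hwy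
  have huw : u ≠ w := by have := one_le_inDeg he₀; rintro rfl; omega
  have hyuw : y ≠ u ∧ y ≠ w := ⟨by rintro rfl; omega, by rintro rfl; omega⟩
  obtain ⟨D'', hD'', hin'', hlt⟩ := ih _ (erase_ssubset he₀X) _ hD' hin'
    (by have := outDeg_update_add he₀ w; simp [huw] at this; omega)
    (by have := outDeg_update_add he₀ y; simp [hyuw.1.symm, hyuw.2.symm] at this; omega) hwy'
  exact ⟨D'', hD'', hin'', by rw [if_pos (by omega)] at hexcess; omega⟩

theorem IsPseudoforest.exists_orientation_inDeg_le_one_outDeg_le (hf : ∀ v, 2 ≤ f v)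
    (hpf : IsPseudoforest ends) (hdeg : ∀ v, degree ends v ≤ f v) :
    ∃ D, IsOrientation ends D ∧ (∀ v, inDeg D v ≤ 1) ∧ ∀ v, outDeg D v ≤ f v - 1 := by
  obtain ⟨D₀, hD₀⟩ := hpf.exists_orientation_inDeg_le_one
  obtain ⟨D, hD, hmin⟩ := (univ.filter fun D => IsOrientation ends D ∧ ∀ v, inDeg D v ≤ 1)
    |>.exists_min_image (outExcess f) ⟨D₀, mem_filter.mpr ⟨mem_univ _, hD₀⟩⟩
  obtain ⟨hDo, hin⟩ := (mem_filter.mp hD).2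
  refine ⟨D, hDo, hin, fun v => ?_⟩
  by_contra! hv
  have hv0 : inDeg D v = 0 := by have := hDo.degree_eq v ▸ hdeg v; omega
  obtain ⟨y, hvy, hy⟩ := exists_reaches_outDeg_add_two_le hf hin hv0 (by omega)
  obtain ⟨D', hD', hin', hlt⟩ := exists_outExcess_lt hdeg univ D hDo hin (by omega) hy hvy
  exact (hmin D' (mem_filter.mpr ⟨mem_univ _, hD', hin'⟩)).not_gt hlt

end Reorientation

section Galvin

variable {E α β γ κ : Type*} (left : E → α) (right : E → β)

/-- Each colour class of `C` is a matching of the bipartite multigraph in which the edge `e`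
joins `left e` to `right e`. -/
def IsProperColoring (C : E → γ) : Prop :=
  ∀ ⦃e e'⦄, C e = C e' → left e = left e' ∨ right e = right e' → e = e'

variable [LinearOrder κ] (c : E → κ)

/-- Galvin's orientation of the line graph: edges sharing a left end point point towards the
smaller colour, edges sharing a right end point towards the larger one. -/
def GalvinArc (e e' : E) : Prop :=
  (left e' = left e ∧ c e' < c e) ∨ (right e' = right e ∧ c e < c e')

def IsGalvinKernel (A K : Finset E) : Prop :=
  K ⊆ A ∧ (∀ e ∈ K, ∀ e' ∈ K, left e = left e' ∨ right e = right e' → e = e') ∧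
    ∀ e ∈ A, e ∉ K → ∃ e' ∈ K, GalvinArc left right c e e'

variable {left right c}

/-- Kernels exist by the Gale–Shapley argument: every left end point proposes its edge of
smallest colour; when two proposals meet at a right end point, the one of smaller colour is
rejected and the construction is repeated without it. -/
lemma exists_isGalvinKernel (hc : IsProperColoring left right c) (A : Finset E) :
    ∃ K, IsGalvinKernel left right c A K := by
  induction A using strongInduction with
  | H A ih =>
  set P := A.filter fun e => ∀ e' ∈ A, left e' = left e → c e ≤ c e'
  have hP e (he : e ∈ A) : ∃ e₀ ∈ P, left e₀ = left e ∧ c e₀ ≤ c e := by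
    obtain ⟨e₀, he₀, hmin⟩ := (A.filter fun e' => left e' = left e).exists_min_image c
      ⟨e, mem_filter.mpr ⟨he, rfl⟩⟩
    obtain ⟨he₀A, hl⟩ := mem_filter.mp he₀
    exact ⟨e₀, mem_filter.mpr ⟨he₀A, fun e' he' hl' =>
      hmin e' (mem_filter.mpr ⟨he', hl'.trans hl⟩)⟩, hl, hmin e (by simp [he])⟩
  by_cases hmatch : ∀ e ∈ P, ∀ e' ∈ P, right e = right e' → e = e'
  · refine ⟨P, filter_subset _ _, ?_, fun e heA heP => ?_⟩
    · rintro e he e' he' (hl | hr)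
      · exact hc (le_antisymm ((mem_filter.mp he).2 e' (filter_subset _ _ he') hl.symm)
          ((mem_filter.mp he').2 e (filter_subset _ _ he) hl)) (.inl hl)
      · exact hmatch e he e' he' hr
    · obtain ⟨e₀, he₀P, hl, hle⟩ := hP e heA
      refine ⟨e₀, he₀P, .inl ⟨hl, hle.lt_of_ne fun hce => heP ?_⟩⟩
      rwa [← hc hce (.inl hl)]
  push Not at hmatch
  obtain ⟨a, haP, b, hbP, hr, hab⟩ : ∃ a ∈ P, ∃ b ∈ P, right a = right b ∧ c a < c b := by
    obtain ⟨e₁, he₁, e₂, he₂, hr, hne⟩ := hmatch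
    rcases lt_or_gt_of_ne fun hce => hne (hc hce (.inr hr)) with h | h
    exacts [⟨e₁, he₁, e₂, he₂, hr, h⟩, ⟨e₂, he₂, e₁, he₁, hr.symm, h⟩]
  have haA := filter_subset _ _ haP
  obtain ⟨K, hKA, hKind, hKdom⟩ := ih (A.erase a) (erase_ssubset haA)
  refine ⟨K, hKA.trans (erase_subset _ _), hKind, fun e heA heK => ?_⟩
  rcases eq_or_ne e a with rfl | hea
  · by_cases hbK : b ∈ K
    · exact ⟨b, hbK, .inr ⟨hr.symm, hab⟩⟩
    obtain ⟨e', he'K, ⟨hl', hlt⟩ | ⟨hr', hlt⟩⟩ := hKdom b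
      (mem_erase.mpr ⟨(hab.ne' <| congrArg c ·), filter_subset _ _ hbP⟩) hbK
    · exact absurd ((mem_filter.mp hbP).2 e' (mem_of_mem_erase (hKA he'K)) hl')
        hlt.not_ge
    · exact ⟨e', he'K, .inr ⟨hr'.trans hr.symm, hab.trans hlt⟩⟩
  · exact hKdom e (mem_erase.mpr ⟨hea, heA⟩) heK

/-- Colour a kernel of the edges whose list contains some colour `a` with `a`, delete `a` from
the remaining lists and recurse: each remaining edge that lost `a` also lost an out-neighbour. -/
lemma exists_listColoring_of_card_galvinArc_lt [DecidableEq E] [DecidableEq γ] [Nonempty γ]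
    (hc : IsProperColoring left right c) (A : Finset E) (L : E → Finset γ)
    (hL : ∀ e ∈ A, #(A.filter (GalvinArc left right c e)) < #(L e)) :
    ∃ C : E → γ, (∀ e ∈ A, C e ∈ L e) ∧
      ∀ e ∈ A, ∀ e' ∈ A, C e = C e' → left e = left e' ∨ right e = right e' → e = e' := by
  induction A using strongInduction generalizing L with
  | H A ih =>
  obtain rfl | ⟨e₀, he₀⟩ := A.eq_empty_or_nonempty
  · exact ⟨fun _ => Classical.arbitrary γ, by simp, by simp⟩
  obtain ⟨a, ha⟩ : (L e₀).Nonempty := card_pos.mp (by have := hL e₀ he₀; omega)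
  obtain ⟨K, hKA, hKind, hKdom⟩ := exists_isGalvinKernel hc (A.filter (a ∈ L ·))
  have hKne : K.Nonempty := by
    by_contra! hK
    obtain ⟨e', he', -⟩ := hKdom e₀ (mem_filter.mpr ⟨he₀, ha⟩) (by simp [hK])
    simp [hK] at he'
  have hKA' : K ⊆ A := hKA.trans (filter_subset _ _)
  obtain ⟨C, hCL, hC⟩ := ih (A \ K) (sdiff_ssubset hKA' hKne) (fun e => (L e).erase a) <| by
    intro e he
    obtain ⟨heA, heK⟩ := mem_sdiff.mp he
    have hsub : (A \ K).filter (GalvinArc left right c e) ⊆ A.filter (GalvinArc left right c e) :=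
      filter_subset_filter _ sdiff_subset
    by_cases hae : a ∈ L e
    · obtain ⟨e', he'K, harc⟩ := hKdom e (mem_filter.mpr ⟨heA, hae⟩) heK
      have hlt := card_lt_card <| (ssubset_iff_of_subset hsub).mpr ⟨e',
        mem_filter.mpr ⟨hKA' he'K, harc⟩, fun h => (mem_sdiff.mp (mem_filter.mp h).1).2 he'K⟩
      have := hL e heA
      rw [card_erase_of_mem hae]
      omega
    · rw [erase_eq_of_notMem hae]
      exact (card_le_card hsub).trans_lt (hL e heA)
  refine ⟨fun e => if e ∈ K then a else C e, fun e he => ?_, fun e he e' he' hCe hadj => ?_⟩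
  · dsimp only
    split_ifs with heK
    exacts [(mem_filter.mp (hKA heK)).2, mem_of_mem_erase (hCL e (mem_sdiff.mpr ⟨he, heK⟩))]
  · have hCa e (he : e ∈ A) (heK : e ∉ K) : C e ≠ a :=
      ne_of_mem_erase (hCL e (mem_sdiff.mpr ⟨he, heK⟩))
    dsimp only at hCe
    split_ifs at hCe with heK he'K he'K
    · exact hKind e heK e' he'K hadj
    · exact absurd hCe.symm (hCa e' he' he'K)
    · exact absurd hCe (hCa e he heK)
    · exact hC e (mem_sdiff.mpr ⟨he, heK⟩) e' (mem_sdiff.mpr ⟨he', he'K⟩) hCe hadj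

/-- Galvin's theorem. -/
theorem IsProperColoring.exists_listColoring [Fintype E] [DecidableEq E] [DecidableEq γ]
    [Nonempty γ] {k : ℕ} {c : E → Fin k} (hc : IsProperColoring left right c)
    (L : E → Finset γ) (hL : ∀ e, k ≤ #(L e)) :
    ∃ C : E → γ, (∀ e, C e ∈ L e) ∧ IsProperColoring left right C := by
  have harcs e : #(univ.filter (GalvinArc left right c e)) < #(L e) := by
    have hinj : Set.InjOn c (univ.filter (GalvinArc left right c e)) := by
      intro e₁ h₁ e₂ h₂ hce
      obtain ⟨hl₁, hlt₁⟩ | ⟨hr₁, hlt₁⟩ := (mem_filter.mp h₁).2 <;>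
        obtain ⟨hl₂, hlt₂⟩ | ⟨hr₂, hlt₂⟩ := (mem_filter.mp h₂).2
      · exact hc hce (.inl (hl₁.trans hl₂.symm))
      · exact absurd (hce ▸ hlt₁) hlt₂.asymm
      · exact absurd (hce ▸ hlt₂) hlt₁.asymm
      · exact hc hce (.inr (hr₁.trans hr₂.symm))
    have := card_le_card_of_injOn (t := univ.erase (c e)) c
      (fun e' he' => mem_erase.mpr ⟨?_, mem_univ _⟩) hinj
    · rw [card_erase_of_mem (mem_univ _), card_univ, Fintype.card_fin] at this
      have := hL e
      have := (c e).pos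
      omega
    · obtain ⟨-, hlt⟩ | ⟨-, hlt⟩ := (mem_filter.mp he').2
      exacts [hlt.ne, hlt.ne']
  obtain ⟨C, hCL, hC⟩ := exists_listColoring_of_card_galvinArc_lt hc univ L fun e _ => harcs e
  exact ⟨C, fun e => hCL e (mem_univ e), fun e e' => hC e (mem_univ e) e' (mem_univ e')⟩

end Galvin

section Slots

variable {V E : Type} [Fintype V] [DecidableEq V] {ends : E → Sym2 V} {f : V → ℕ}

def IsDegreePseudoforest [Fintype E] (ends : E → Sym2 V) (f : V → ℕ) : Prop :=
  IsPseudoforest ends ∧ ∀ v, degree ends v ≤ f v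

lemma IsDegreePseudoforest.of_subEnds_iff {P Q : E → Prop} [Fintype {e // P e}]
    [Fintype {e // Q e}] (hPQ : ∀ e, P e ↔ Q e) (h : IsDegreePseudoforest (subEnds ends P) f) :
    IsDegreePseudoforest (subEnds ends Q) f := by
  obtain rfl : P = Q := funext fun e => propext (hPQ e)
  convert h

lemma exists_slot [Fintype E] {ι : Type} [DecidableEq ι] (t : E → ι) (m : ι → ℕ)
    (h : ∀ i, #{e | t e = i} ≤ m i) :
    ∃ slot : E → ℕ, (∀ e, slot e < m (t e)) ∧ Function.Injective fun e => (t e, slot e) := by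
  have g i : {e // t e = i} ↪ Fin (m i) :=
    (Function.Embedding.nonempty_of_card_le (by simpa [Fintype.card_subtype] using h i)).some
  have key e i (he : t e = i) : (g (t e) ⟨e, rfl⟩ : ℕ) = g i ⟨e, he⟩ := by subst he; rfl
  refine ⟨fun e => g (t e) ⟨e, rfl⟩, fun e => (g _ _).isLt, fun e e' h => ?_⟩
  simp only [Prod.mk.injEq] at h
  obtain ⟨ht, hs⟩ := h
  rw [key e (t e') ht] at hs
  exact congrArg Subtype.val ((g _).injective (Fin.ext hs))

/-- Splitting every vertex `v` into `f v - 1` tails and one head turns a degree-`f` pseudoforest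
into a matching. -/
lemma IsDegreePseudoforest.exists_orientation_slot [Fintype E] (hf : ∀ v, 2 ≤ f v)
    (h : IsDegreePseudoforest ends f) :
    ∃ (D : E → V × V) (slot : E → ℕ), IsOrientation ends D ∧ (∀ e, slot e < f (D e).1 - 1) ∧
      Function.Injective (fun e => ((D e).1, slot e)) ∧ Function.Injective fun e => (D e).2 := by
  obtain ⟨D, hD, hin, hout⟩ := h.1.exists_orientation_inDeg_le_one_outDeg_le hf h.2
  obtain ⟨slot, hslot, hinj⟩ := exists_slot (fun e => (D e).1) (f · - 1) hout
  exact ⟨D, slot, hD, hslot, hinj, inDeg_le_one_iff.mp hin⟩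

lemma isDegreePseudoforest_of_slot [Fintype E] (hf : ∀ v, 1 ≤ f v) {D : E → V × V}
    (hD : IsOrientation ends D) {slot : E → ℕ} (hslot : ∀ e, slot e < f (D e).1 - 1)
    (htail : Function.Injective fun e => ((D e).1, slot e))
    (hhead : Function.Injective fun e => (D e).2) : IsDegreePseudoforest ends f := by
  have hin := inDeg_le_one_iff.mpr hhead
  refine ⟨isPseudoforest_of_inDeg_le_one hD hin, fun v => ?_⟩
  have hout : outDeg D v ≤ f v - 1 := calc
    outDeg D v ≤ #(range (f v - 1)) := card_le_card_of_injOn slot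
      (fun e he => mem_range.mpr ((mem_filter.mp he).2 ▸ hslot e))
      fun e₁ h₁ e₂ h₂ hs =>
        htail (Prod.ext ((mem_filter.mp h₁).2.trans (mem_filter.mp h₂).2.symm) hs)
    _ = f v - 1 := card_range _
  have := hin v
  have := hf v
  rw [hD.degree_eq]
  omega

end Slots

section Colorings

variable {V E : Type} [Fintype V] [DecidableEq V] {ends : E → Sym2 V} {f : V → ℕ}

lemma PafColoring.exists_isProperColoring [Fintype E] (hf : ∀ v, 2 ≤ f v) {k : ℕ} {C : E → Fin k}
    (hC : PafColoring ends f C) :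
    ∃ (D : E → V × V) (slot : E → ℕ), IsOrientation ends D ∧ (∀ e, slot e < f (D e).1 - 1) ∧
      IsProperColoring (fun e => ((D e).1, slot e)) (fun e => (D e).2) C := by
  choose Dc slotc hDc hslotc htail hhead using
    fun c => IsDegreePseudoforest.exists_orientation_slot hf (hC c)
  have key e c (h : C e = c) :
      Dc (C e) ⟨e, rfl⟩ = Dc c ⟨e, h⟩ ∧ slotc (C e) ⟨e, rfl⟩ = slotc c ⟨e, h⟩ := by
    subst h; exact ⟨rfl, rfl⟩
  refine ⟨fun e => Dc (C e) ⟨e, rfl⟩, fun e => slotc (C e) ⟨e, rfl⟩, fun e => hDc _ ⟨e, rfl⟩,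
    fun e => hslotc _ ⟨e, rfl⟩, fun e e' hce hadj => ?_⟩
  simp only [(key e _ hce).1, (key e _ hce).2] at hadj
  exact congrArg Subtype.val <| hadj.elim (htail _ ·) (hhead _ ·)

lemma isDegreePseudoforest_of_isProperColoring (hf : ∀ v, 1 ≤ f v) {D : E → V × V}
    (hD : IsOrientation ends D) {slot : E → ℕ} (hslot : ∀ e, slot e < f (D e).1 - 1)
    {γ : Type} {C : E → γ} (hC : IsProperColoring (fun e => ((D e).1, slot e)) (fun e => (D e).2) C)
    (c : γ) [Fintype {e // C e = c}] : IsDegreePseudoforest (subEnds ends fun e => C e = c) f :=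
  isDegreePseudoforest_of_slot hf (D := fun e => D e.1) (fun e => hD e.1) (fun e => hslot e.1)
    (fun e e' h => Subtype.ext (hC (e.2.trans e'.2.symm) (.inl h)))
    fun e e' h => Subtype.ext (hC (e.2.trans e'.2.symm) (.inr h))

lemma exists_pafColoring [Fintype E] (hf : ∀ v, 2 ≤ f v) :
    ∃ k, ∃ C : E → Fin k, PafColoring ends f C := by
  obtain ⟨D, hD⟩ := exists_isOrientation ends
  refine ⟨_, Fintype.equivFin E, fun c => isDegreePseudoforest_of_isProperColoring
    (fun v => (hf v).trans' one_le_two) hD (slot := 0) (fun e => Nat.sub_pos_of_lt (hf (D e).1))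
    (fun e e' h _ => (Fintype.equivFin E).injective h) c⟩

def ListPafColorable [Fintype E] (ends : E → Sym2 V) (f : V → ℕ) (k : ℕ) : Prop :=
  ∀ L : E → Finset ℕ, (∀ e, k ≤ #(L e)) →
    ∃ C : E → ℕ, (∀ e, C e ∈ L e) ∧ ∀ c, IsDegreePseudoforest (subEnds ends fun e => C e = c) f

lemma exists_pafColoring_paf [Fintype E] (hf : ∀ v, 2 ≤ f v) :
    ∃ C : E → Fin (paf ends f), PafColoring ends f C := by
  obtain ⟨k, C, hC⟩ := exists_pafColoring (ends := ends) hf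
  exact Nat.sInf_mem (s := {k | ∃ C : E → Fin k, PafColoring ends f C}) ⟨k, C, hC⟩

end Colorings

/-- for every multigraph `G` and `f` with `f(v) ≥ 2` everywhere, the
list degree-`f` pseudoarboricity equals the degree-`f` pseudoarboricity:
`pa_{f,ℓ}(G) = pa_f(G)`. -/
theorem pafList_eq_paf {V E : Type} [Fintype V] [Fintype E] [DecidableEq V]
    (ends : E → Sym2 V) (f : V → ℕ) (hf : ∀ v, 2 ≤ f v) :
    pafList ends f = paf ends f := by
  have hf₁ v : 1 ≤ f v := (hf v).trans' one_le_two
  obtain ⟨C₀, hC₀⟩ := exists_pafColoring_paf (ends := ends) hf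
  obtain ⟨D, slot, hD, hslot, hproper⟩ := hC₀.exists_isProperColoring hf
  have hpaf : ListPafColorable ends f (paf ends f) := fun L hL => by
    obtain ⟨C, hCL, hC⟩ := hproper.exists_listColoring L hL
    exact ⟨C, hCL, fun c => isDegreePseudoforest_of_isProperColoring hf₁ hD hslot hC c⟩
  have hpafList : ListPafColorable ends f (pafList ends f) :=
    Nat.sInf_mem (s := {k | ListPafColorable ends f k}) ⟨_, hpaf⟩
  obtain ⟨C, hCL, hC⟩ := hpafList (fun _ => range (pafList ends f)) (by simp)
  refine le_antisymm (Nat.sInf_le hpaf) (Nat.sInf_le ⟨fun e => ⟨C e, mem_range.mp (hCL e)⟩, ?_⟩)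
  exact fun c => (hC c).of_subEnds_iff fun e => Fin.ext_iff.symm

end MG
end
end
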